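/- If G is a countable IB-homogeneous graph that represents m (some bimorphism maps a nonedge to an edge), then for every finite independent set A of G and every vertex set B of the same size, there is a bimorphism of G mapping A bijectively onto B. -/

import Mathlib

/-- A bimorphism of a graph: a bijective edge-preserving self-map. -/
def IsBimorphism {V : Type*} (G : SimpleGraph V) (F : V → V) : Prop :=
  Function.Bijective F ∧ ∀ u v, G.Adj u v → G.Adj (F u) (F v)

/-- A partial isomorphism of `G` with finite domain `S`. -/
def IsPartialIso {V : Type*} (G : SimpleGraph V) (S : Finset V) (f : V → V) : Prop :=
  Set.InjOn f S ∧ ∀ u ∈ S, ∀ v ∈ S, (G.Adj u v ↔ G.Adj (f u) (f v))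

/-- `G` is IB-homogeneous: every isomorphism between finite induced subgraphs
extends to a bimorphism of `G`. -/
def IBHom {V : Type*} (G : SimpleGraph V) : Prop :=
  ∀ (S : Finset V) (f : V → V), IsPartialIso G S f →
    ∃ F : V → V, IsBimorphism G F ∧ ∀ x ∈ S, F x = f x

/-- `G` represents the monomorphism `m`: some bimorphism maps a nonedge to an edge. -/
def RepM {V : Type*} (G : SimpleGraph V) : Prop :=
  ∃ F : V → V, IsBimorphism G F ∧
    ∃ u v : V, u ≠ v ∧ ¬ G.Adj u v ∧ G.Adj (F u) (F v)

/-- An independent set: pairwise nonadjacent vertices. -/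
def IsIndep {V : Type*} (G : SimpleGraph V) (s : Set V) : Prop :=
  s.Pairwise fun u v => ¬ G.Adj u v

/-!
Pulling back along bimorphisms removes edges: if `B` spans an edge `uv`, then composing a
bimorphism that sends a nonedge to an edge (from `RepM`) with one extending the partial isomorphism
between the two edges (from IB-homogeneity) gives a bimorphism `K` with `uv` the image of a nonedge,
so `K⁻¹(B)` spans fewer edges than `B`. Iterating, every finite `B` is the bimorphic image of an
independent set of the same size, and a bijection between two independent sets of equal size is a
partial isomorphism, hence extends to a bimorphism.
-/

section

open Set

variable {V : Type*} {G : SimpleGraph V}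

namespace IsBimorphism

variable (G) in
theorem id : IsBimorphism G id :=
  ⟨Function.bijective_id, fun _ _ h => h⟩

theorem comp {F H : V → V} (hH : IsBimorphism G H) (hF : IsBimorphism G F) :
    IsBimorphism G (H ∘ F) :=
  ⟨hH.1.comp hF.1, fun _ _ h => hH.2 _ _ (hF.2 _ _ h)⟩

end IsBimorphism

theorem IsIndep.not_adj {s : Set V} (hs : IsIndep G s) {u v : V} (hu : u ∈ s) (hv : v ∈ s) :
    ¬ G.Adj u v := by
  rcases eq_or_ne u v with rfl | huv
  · exact G.irrefl
  · exact hs hu hv huv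

theorem isPartialIso_of_isIndep {S : Finset V} {T : Set V} {f : V → V} (hS : IsIndep G ↑S)
    (hT : IsIndep G T) (hinj : InjOn f S) (hmaps : MapsTo f S T) : IsPartialIso G S f :=
  ⟨hinj, fun _ hu _ hv => iff_of_false (hS.not_adj hu hv) (hT.not_adj (hmaps hu) (hmaps hv))⟩

theorem isPartialIso_pair [DecidableEq V] {a b u v : V} {f : V → V} (hab : G.Adj a b)
    (huv : G.Adj u v) (ha : f a = u) (hb : f b = v) : IsPartialIso G {a, b} f := by
  refine ⟨by simp [ha, hb, huv.ne], ?_⟩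
  simp only [Finset.mem_insert, Finset.mem_singleton]
  rintro p (rfl | rfl) q (rfl | rfl) <;> simp [ha, hb, hab, huv, hab.symm, huv.symm]

namespace IBHom

theorem exists_bimorphism_image_eq_of_isIndep [Nonempty V] (hG : IBHom G) {S : Finset V}
    {T : Set V} (hS : IsIndep G ↑S) (hT : IsIndep G T) (hcard : (S : Set V).encard = T.encard) :
    ∃ F : V → V, IsBimorphism G F ∧ F '' S = T := by
  obtain ⟨f, hf⟩ := S.finite_toSet.exists_bijOn_of_encard_eq hcard
  obtain ⟨F, hF, hFf⟩ := hG S f (isPartialIso_of_isIndep hS hT hf.injOn hf.mapsTo)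
  exact ⟨F, hF, (image_congr hFf).trans hf.image_eq⟩

theorem exists_bimorphism_nonadj_to_adj (hG : IBHom G) (hm : RepM G) {u v : V}
    (huv : G.Adj u v) :
    ∃ K : V → V, ∃ x y : V, IsBimorphism G K ∧ ¬ G.Adj x y ∧ K x = u ∧ K y = v := by
  classical
  obtain ⟨F, hF, a, b, -, hab, hFab⟩ := hm
  obtain ⟨H, hH, hHf⟩ := hG {F a, F b} (fun z => if z = F a then u else v)
    (isPartialIso_pair (a := F a) (b := F b) hFab huv (if_pos rfl) (if_neg hFab.ne.symm))
  refine ⟨H ∘ F, a, b, hH.comp hF, hab, ?_, ?_⟩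
  · simp [hHf (F a)]
  · simp [hHf (F b), hFab.ne.symm]

end IBHom

variable (G) in
def adjPairs (B : Set V) : Set (V × V) :=
  {p | p.1 ∈ B ∧ p.2 ∈ B ∧ G.Adj p.1 p.2}

theorem Set.Finite.adjPairs {B : Set V} (hB : B.Finite) : (adjPairs G B).Finite :=
  (hB.prod hB).subset fun _ hp => ⟨hp.1, hp.2.1⟩

theorem ncard_adjPairs_preimage_lt {K : V → V} (hK : IsBimorphism G K) {B : Set V}
    (hB : B.Finite) {x y : V} (hxy : ¬ G.Adj x y) (hx : K x ∈ B) (hy : K y ∈ B)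
    (hKxy : G.Adj (K x) (K y)) :
    (adjPairs G (K ⁻¹' B)).ncard < (adjPairs G B).ncard := by
  have hinj : Function.Injective (Prod.map K K) := hK.1.1.prodMap hK.1.1
  have hsub : Prod.map K K '' adjPairs G (K ⁻¹' B) ⊂ adjPairs G B := by
    refine ⟨?_, fun h => ?_⟩
    · rintro _ ⟨p, ⟨hp₁, hp₂, hp⟩, rfl⟩
      exact ⟨hp₁, hp₂, hK.2 _ _ hp⟩
    · obtain ⟨p, ⟨-, -, hp⟩, hpxy⟩ := h (show (K x, K y) ∈ adjPairs G B from ⟨hx, hy, hKxy⟩)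
      obtain rfl : p = (x, y) := hinj hpxy
      exact hxy hp
  calc (adjPairs G (K ⁻¹' B)).ncard = (Prod.map K K '' adjPairs G (K ⁻¹' B)).ncard :=
        (ncard_image_of_injective _ hinj).symm
    _ < (adjPairs G B).ncard := ncard_lt_ncard hsub hB.adjPairs

theorem IBHom.exists_isIndep_bimorphism_image_eq (hG : IBHom G) (hm : RepM G) {B : Set V}
    (hB : B.Finite) : ∃ A : Set V, ∃ F : V → V, IsBimorphism G F ∧ IsIndep G A ∧ F '' A = B := by
  induction hn : (adjPairs G B).ncard using Nat.strong_induction_on generalizing B with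
  | _ n ih =>
    by_cases hind : IsIndep G B
    · exact ⟨B, id, .id G, hind, image_id B⟩
    obtain ⟨u, hu, v, hv, -, huv⟩ : ∃ u ∈ B, ∃ v ∈ B, u ≠ v ∧ G.Adj u v := by
      simpa [IsIndep, Set.Pairwise] using hind
    obtain ⟨K, x, y, hK, hxy, rfl, rfl⟩ := hG.exists_bimorphism_nonadj_to_adj hm huv
    obtain ⟨A, F, hF, hA, hAF⟩ :=
      ih _ (hn ▸ ncard_adjPairs_preimage_lt hK hB hxy hu hv huv) (hB.preimage hK.1.1.injOn) rfl
    exact ⟨A, K ∘ F, hK.comp hF, hA, by rw [image_comp, hAF, image_preimage_eq B hK.1.2]⟩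

end

theorem stmt17_general {V : Type*} (G : SimpleGraph V) (hG : IBHom G) (hm : RepM G)
    (A B : Finset V) (hA : IsIndep G ↑A) (hcard : A.card = B.card) :
    ∃ F : V → V, IsBimorphism G F ∧ F '' ↑A = ↑B := by
  obtain ⟨A', F, hF, hA', hA'B⟩ := hG.exists_isIndep_bimorphism_image_eq hm B.finite_toSet
  have : Nonempty V := let ⟨_, _, u, _⟩ := hm; ⟨u⟩
  have hcard' : (A : Set V).encard = A'.encard := by
    rw [← hF.1.1.encard_image A', hA'B, Set.encard_coe_eq_coe_finsetCard,
      Set.encard_coe_eq_coe_finsetCard, hcard]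
  obtain ⟨H, hH, hHA⟩ := hG.exists_bimorphism_image_eq_of_isIndep hA hA' hcard'
  exact ⟨F ∘ H, hF.comp hH, by rw [Set.image_comp, hHA, hA'B]⟩

/-- In a countable IB-homogeneous graph representing `m`, every finite independent set can
be mapped bijectively onto any vertex set of the same size by a bimorphism. -/
theorem stmt17 {V : Type*} [Countable V] (G : SimpleGraph V) (hG : IBHom G) (hm : RepM G)
    (A B : Finset V) (hA : IsIndep G ↑A) (hcard : A.card = B.card) :
    ∃ F : V → V, IsBimorphism G F ∧ F '' ↑A = ↑B :=
  stmt17_general G hG hm A B hA hcard
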